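/- Let T be a nonspecial ω₁-tree. Then ◊_T implies ◊. -/

import Mathlib

open Set

/-- The first uncountable ordinal `ω₁`. -/
noncomputable def omega1 : Ordinal := Ordinal.omega 1

section TreeDefs

variable {T : Type*} [PartialOrder T]

/-- In a tree, the set of strict predecessors of any node is linearly ordered. -/
def PredsChain (T : Type*) [PartialOrder T] : Prop :=
  ∀ t : T, IsChain (· ≤ ·) {s : T | s < t}

/-- `ht` is *the* height function of the tree: it is strictly monotone on comparable pairs and
the heights of the strict predecessors of `t` are exactly the ordinals below `ht t`; together
with `PredsChain` this says that the set `t↓` of strict predecessors of `t` is well-ordered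
with order type `ht t`. -/
def IsHeightFun (ht : T → Ordinal) : Prop :=
  (∀ s t : T, s < t → ht s < ht t) ∧
  ∀ t : T, ∀ o : Ordinal, o < ht t → ∃ s : T, s < t ∧ ht s = o

/-- The tree has height `ω₁`: every node has height `< ω₁` and every countable ordinal is the
height of some node. -/
def HeightOmega1 (ht : T → Ordinal) : Prop :=
  (∀ t : T, ht t < omega1) ∧ ∀ o : Ordinal, o < omega1 → ∃ t : T, ht t = o

/-- All levels of the tree are countable. -/
def CountableLevels (ht : T → Ordinal) : Prop :=
  ∀ o : Ordinal, {t : T | ht t = o}.Countable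

/-- A tree of height `ω₁` is well-pruned if every node has successors in all later levels. -/
def WellPruned (ht : T → Ordinal) : Prop :=
  ∀ o o' : Ordinal, o < o' → o' < omega1 →
    ∀ s : T, ht s = o → ∃ t : T, s < t ∧ ht t = o'

/-- A special subset of a tree: a union of countably many antichains. -/
def IsSpecialSet (U : Set T) : Prop :=
  ∃ A : ℕ → Set T, (∀ n : ℕ, IsAntichain (· ≤ ·) (A n)) ∧ U ⊆ ⋃ n, A n

/-- Membership in the ideal `NS^T`: there is a regressive map on `B` all of whose fibers
are special. -/
def InNS [OrderBot T] (B : Set T) : Prop :=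
  ∃ f : T → T, (∀ t ∈ B, t ≠ ⊥ → f t < t) ∧
    ∀ t : T, IsSpecialSet {s : T | s ∈ B ∧ f s = t}

/-- The diamond principle `◊_T` for a tree `T`. -/
def DiamondTree (T : Type*) [PartialOrder T] [OrderBot T] : Prop :=
  ∃ D : T → Set T, (∀ t : T, D t ⊆ Set.Iio t) ∧
    ∀ X : Set T, ¬ InNS {t : T | X ∩ Set.Iio t = D t}

end TreeDefs

/-- Club subsets of `ω₁`: closed and unbounded in `ω₁`. -/
def IsClubIn (C : Set Ordinal) : Prop :=
  C ⊆ Set.Iio omega1 ∧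
  (∀ o : Ordinal, o < omega1 → ∃ b ∈ C, o < b) ∧
  ∀ o : Ordinal, o < omega1 → (C ∩ Set.Iio o).Nonempty →
    IsLUB (C ∩ Set.Iio o) o → o ∈ C

/-- Stationary subsets of `ω₁`: sets meeting every club. -/
def IsStationaryIn (S : Set Ordinal) : Prop :=
  ∀ C : Set Ordinal, IsClubIn C → (S ∩ C).Nonempty

/-- The diamond principle `◊(S)` for `S ⊆ ω₁`;  `◊` is `DiamondOn (Set.Iio omega1)`. -/
def DiamondOn (S : Set Ordinal) : Prop :=
  ∃ D : Ordinal → Set Ordinal, (∀ o ∈ S, D o ⊆ Set.Iio o) ∧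
    ∀ X : Set Ordinal, X ⊆ Set.Iio omega1 →
      IsStationaryIn {o ∈ S | X ∩ Set.Iio o = D o}

/-!
From a `◊_T`-sequence `(D_t)` read off, at every node `t` of height `α`, the sets
`E_n(t) = {β < α | some s ∈ D_t has height ω * β + n}`. Enumerating each countable level as
`(t_{α,k})_k` yields countably many candidate `◊`-sequences `α ↦ E_n(t_{α,n})`. If all of them
failed, with counterexamples `X_n` and clubs `C_n`, code every `X_n` into the single set of nodes
`Y = {s | ht s = ω * β + n, β ∈ X_n}`. The nodes whose height avoids a club form a set in `NS^T`,
so `D_t = Y ∩ t↓` for some `t` whose height `α` lies in every `C_n` and satisfies `ω * α = α`.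
Writing `t = t_{α,n}`, the closure of `α` under `β ↦ ω * β + n` gives `E_n(t) = X_n ∩ α` with
`α ∈ C_n`, contradicting the choice of `C_n`.
-/

open Ordinal

universe u v

lemma countable_Iio_of_lt_omega1 {o : Ordinal} (ho : o < omega1) : (Iio o).Countable := by
  rw [omega1, ← Cardinal.ord_aleph, Cardinal.lt_ord, Cardinal.lt_aleph_one_iff] at ho
  rw [← Cardinal.le_aleph0_iff_set_countable, Cardinal.mk_Iio_ordinal, Cardinal.lift_le_aleph0]
  exact ho

lemma lift_omega1 : Ordinal.lift.{v} (omega1 : Ordinal.{u}) = omega1 := by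
  unfold omega1
  rw [Ordinal.lift_omega, Ordinal.lift_one]

lemma nonempty_orderIso_Iio_omega1 :
    Nonempty (Iio (omega1 : Ordinal.{u}) ≃o Iio (omega1 : Ordinal.{v})) := by
  obtain ⟨e⟩ := (Ordinal.lift_type_eq.{u + 1, v + 1, 0}
    (r := (· < · : Iio (omega1 : Ordinal.{u}) → _ → Prop))
    (s := (· < · : Iio (omega1 : Ordinal.{v}) → _ → Prop))).1 <| by
    rw [Ordinal.type_lt_Iio, Ordinal.type_lt_Iio, Ordinal.lift_lift, Ordinal.lift_lift,
      lift_omega1, lift_omega1]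
  exact ⟨OrderIso.ofRelIsoLT e⟩

lemma omega0_mul_add_natCast_lt {α β : Ordinal} (hβ : β < α) (hα : ω * α = α) (n : ℕ) :
    ω * β + n < α :=
  calc ω * β + n < ω * β + ω := (add_lt_add_iff_left _).2 (natCast_lt_omega0 n)
    _ = ω * (β + 1) := (mul_add_one _ _).symm
    _ ≤ ω * α := by gcongr; exact Order.add_one_le_of_lt hβ
    _ = α := hα

lemma omega0_mul_add_natCast_inj {β γ : Ordinal} {m n : ℕ} (h : ω * β + m = ω * γ + n) :
    β = γ ∧ m = n := by
  have hdiv : ∀ (β : Ordinal) (n : ℕ), (ω * β + n) / ω = β := fun β n => by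
    rw [mul_add_div _ omega0_ne_zero, div_eq_zero_of_lt (natCast_lt_omega0 n), add_zero]
  obtain rfl : β = γ := by rw [← hdiv β m, ← hdiv γ n, h]
  exact ⟨rfl, Nat.cast_injective (add_left_cancel h)⟩

lemma IsClubIn.mem_of_forall_lt {C : Set Ordinal} (hC : IsClubIn C) {o : Ordinal}
    (ho : o < omega1) (ho₀ : 0 < o) (hcof : ∀ a < o, ∃ c ∈ C, a < c ∧ c < o) : o ∈ C := by
  obtain ⟨c, hcC, -, hco⟩ := hcof 0 ho₀
  refine hC.2.2 o ho ⟨c, hcC, hco⟩ ⟨fun x hx => hx.2.le, fun b hb => ?_⟩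
  by_contra! hbo
  obtain ⟨c, hcC, hbc, hco⟩ := hcof b hbo
  exact (hb ⟨hcC, hco⟩).not_gt hbc

lemma IsClubIn.exists_next {C : Set Ordinal} (hC : IsClubIn C) :
    ∃ next : Ordinal → Ordinal, ∀ o < omega1, next o ∈ C ∧ o < next o := by
  choose next hnext using fun o : Iio omega1 => hC.2.1 o o.2
  classical
  exact ⟨fun o => if h : o < omega1 then next ⟨o, h⟩ else 0, fun o ho => by
    simpa only [dif_pos ho] using hnext ⟨o, ho⟩⟩

lemma IsClubIn.iInter {ι : Type} [Countable ι] [Nonempty ι] {C : ι → Set Ordinal}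
    (hC : ∀ i, IsClubIn (C i)) : IsClubIn (⋂ i, C i) := by
  refine ⟨(iInter_subset _ (Classical.arbitrary ι)).trans (hC _).1, fun o ho => ?_,
    fun o ho hne hlub => mem_iInter.2 fun i => (hC i).2.2 o ho
      (hne.mono (inter_subset_inter_left _ (iInter_subset _ i)))
      ⟨fun x hx => hx.2.le, fun b hb => hlub.2 fun x hx => hb ⟨mem_iInter.1 hx.1 i, hx.2⟩⟩⟩
  choose next hnext using fun i => (hC i).exists_next
  let g : ℕ → Ordinal := fun n => Nat.rec o (fun _ x => ⨆ i, next i x) n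
  have hg_lt : ∀ n, g n < omega1 := by
    intro n
    induction n with
    | zero => exact ho
    | succ n ih => exact iSup_lt_omega_one fun i => (hC i).1 (hnext i _ ih).1
  have hnext_le : ∀ i n, next i (g n) ≤ g (n + 1) := fun i n =>
    Ordinal.le_iSup (fun i => next i (g n)) i
  have hg_succ : ∀ n, g n < g (n + 1) := fun n =>
    (hnext (Classical.arbitrary ι) _ (hg_lt n)).2.trans_le (hnext_le _ n)
  refine ⟨⨆ n, g n, mem_iInter.2 fun i => ?_, (hg_succ 0).trans_le (Ordinal.le_iSup g 1)⟩
  refine (hC i).mem_of_forall_lt (iSup_lt_omega_one hg_lt)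
    (zero_le.trans_lt ((hg_succ 0).trans_le (Ordinal.le_iSup g 1))) fun a ha => ?_
  obtain ⟨n, hn⟩ := Ordinal.lt_iSup_iff.1 ha
  exact ⟨next i (g n), (hnext i _ (hg_lt n)).1, hn.trans (hnext i _ (hg_lt n)).2,
    (hnext_le i n).trans_lt ((hg_succ (n + 1)).trans_le (Ordinal.le_iSup g (n + 2)))⟩

lemma IsClubIn.inter {C C' : Set Ordinal} (hC : IsClubIn C) (hC' : IsClubIn C') :
    IsClubIn (C ∩ C') := by
  rw [inter_eq_iInter]
  exact IsClubIn.iInter (Bool.forall_bool.2 ⟨hC', hC⟩)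

lemma isClubIn_fixedPoints {f : Ordinal → Ordinal} (hf : Order.IsNormal f)
    (hlt : ∀ o < omega1, f o < omega1) : IsClubIn {o | o < omega1 ∧ f o = o} := by
  have hcof : Cardinal.aleph0 < (omega1 : Ordinal).cof := by
    rw [omega1, Cardinal.cof_omega_one]; exact Cardinal.aleph0_lt_aleph_one
  refine ⟨fun o ho => ho.1, fun o ho => ⟨nfp f (o + 1), ⟨nfp_lt_ord hcof hlt ?_, nfp_fp hf _⟩,
    (lt_add_one o).trans_le (le_nfp f _)⟩, fun o ho hne hlub => ⟨ho, ?_⟩⟩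
  · rw [← Order.succ_eq_add_one, omega1, ← Cardinal.ord_aleph]
    exact (Cardinal.isSuccLimit_ord (Cardinal.aleph0_le_aleph 1)).succ_lt
      (by rwa [Cardinal.ord_aleph])
  · have := hf.map_isLUB hlub hne
    rw [image_congr fun x hx => hx.1.2, image_id'] at this
    exact this.unique hlub

lemma IsClubIn.sSup_inter_Iio_lt {C : Set Ordinal} (hC : IsClubIn C) {o : Ordinal}
    (ho : o < omega1) (hoC : o ∉ C) (hne : (C ∩ Iio o).Nonempty) : sSup (C ∩ Iio o) < o :=
  (csSup_le hne fun _ hx => hx.2.le).lt_of_ne fun h =>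
    hoC (hC.2.2 o ho hne (by simpa only [h] using isLUB_csSup hne ⟨o, fun _ hx => hx.2.le⟩))

section Heights

variable {T : Type*}

def heightCode (ht : T → Ordinal) (X : ℕ → Set Ordinal) : Set T :=
  {s | ∃ n : ℕ, ∃ β ∈ X n, ht s = ω * β + n}

def heightDecode (ht : T → Ordinal) (A : Set T) (n : ℕ) (α : Ordinal) : Set Ordinal :=
  {β | β < α ∧ ∃ s ∈ A, ht s = ω * β + n}

lemma CountableLevels.exists_enum [Nonempty T] {ht : T → Ordinal} (hlev : CountableLevels ht) :
    ∃ e : Ordinal → ℕ → T, ∀ t, ∃ n, e (ht t) n = t := by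
  choose e he using fun o => countable_iff_exists_subset_range.1 (hlev o)
  exact ⟨e, fun t => he (ht t) rfl⟩

end Heights

section Tree

variable {T : Type*} [PartialOrder T] {ht : T → Ordinal.{u}}

lemma IsSpecialSet.mono {U V : Set T} (h : U ⊆ V) (hV : IsSpecialSet V) : IsSpecialSet U :=
  let ⟨A, hA, hVA⟩ := hV
  ⟨A, hA, h.trans hVA⟩

lemma InNS.mono [OrderBot T] {B B' : Set T} (h : B ⊆ B') (hB' : InNS B') : InNS B :=
  let ⟨f, hreg, hfib⟩ := hB'
  ⟨f, fun t ht => hreg t (h ht), fun t =>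
    (hfib t).mono fun s (hs : s ∈ B ∧ f s = t) => (⟨h hs.1, hs.2⟩ : s ∈ B' ∧ f s = t)⟩

lemma isAntichain_setOf_ht_eq (hmono : ∀ s t : T, s < t → ht s < ht t) (o : Ordinal) :
    IsAntichain (· ≤ ·) {t | ht t = o} :=
  fun a ha b hb hab hle => (hmono a b (hle.lt_of_ne hab)).ne (ha.trans hb.symm)

lemma isSpecialSet_of_forall_ht_lt (hmono : ∀ s t : T, s < t → ht s < ht t) {δ : Ordinal}
    (hδ : δ < omega1) {U : Set T} (hU : ∀ t ∈ U, ht t < δ) : IsSpecialSet U := by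
  obtain ⟨g, hg⟩ := countable_iff_exists_subset_range.1 (countable_Iio_of_lt_omega1 hδ)
  refine ⟨fun n => {t | ht t = g n}, fun n => isAntichain_setOf_ht_eq hmono _, fun t htU => ?_⟩
  obtain ⟨n, hn⟩ := hg (hU t htU)
  exact mem_iUnion.2 ⟨n, hn.symm⟩

lemma inNS_setOf_ht_notMem [OrderBot T] (hht : IsHeightFun ht) (hΩ : HeightOmega1 ht)
    {C : Set Ordinal} (hC : IsClubIn C) : InNS {t : T | ht t ∉ C} := by
  classical
  -- press `t` down to its predecessor at height `sup (C ∩ ht t)`; a fibre then has bounded height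
  let f : T → T := fun t =>
    if h : sSup (C ∩ Iio (ht t)) < ht t then (hht.2 t _ h).choose else ⊥
  refine ⟨f, fun t _ hbot => ?_, fun u => ?_⟩
  · by_cases h : sSup (C ∩ Iio (ht t)) < ht t
    · simpa only [f, dif_pos h] using (hht.2 t _ h).choose_spec.1
    · simpa only [f, dif_neg h] using bot_lt_iff_ne_bot.2 hbot
  obtain ⟨δ, hδC, hδu⟩ := hC.2.1 (ht u) (hΩ.1 u)
  refine isSpecialSet_of_forall_ht_lt hht.1 (hC.1 hδC) fun t ⟨htC, hft⟩ => ?_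
  by_contra! hδt
  have hδ_mem : δ ∈ C ∩ Iio (ht t) := ⟨hδC, hδt.lt_of_ne fun h => htC (h ▸ hδC)⟩
  have hsup := hC.sSup_inter_Iio_lt (hΩ.1 t) htC ⟨δ, hδ_mem⟩
  have hfu : ht (f t) = sSup (C ∩ Iio (ht t)) := by
    simpa only [f, dif_pos hsup] using (hht.2 t _ hsup).choose_spec.2
  rw [hft] at hfu
  exact hδu.not_ge (hfu ▸ le_csSup ⟨ht t, fun _ hx => hx.2.le⟩ hδ_mem)

lemma exists_mem_of_not_inNS [OrderBot T] (hht : IsHeightFun ht) (hΩ : HeightOmega1 ht)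
    {G : Set T} (hG : ¬ InNS G) {C : Set Ordinal} (hC : IsClubIn C) : ∃ t ∈ G, ht t ∈ C := by
  by_contra! h
  exact hG ((inNS_setOf_ht_notMem hht hΩ hC).mono h)

lemma heightDecode_heightCode_inter_Iio (hht : IsHeightFun ht) (X : ℕ → Set Ordinal) {t : T}
    (hfix : ω * ht t = ht t) (n : ℕ) :
    heightDecode ht (heightCode ht X ∩ Iio t) n (ht t) = X n ∩ Iio (ht t) := by
  ext β
  constructor
  · rintro ⟨hβ, s, ⟨⟨m, γ, hγ, hs⟩, -⟩, hs'⟩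
    obtain ⟨rfl, rfl⟩ := omega0_mul_add_natCast_inj (hs.symm.trans hs')
    exact ⟨hγ, hβ⟩
  · rintro ⟨hβX, hβ⟩
    obtain ⟨s, hst, hs⟩ := hht.2 t _ (omega0_mul_add_natCast_lt hβ hfix n)
    exact ⟨hβ, s, ⟨⟨n, β, hβX, hs⟩, hst⟩, hs⟩

theorem diamondOn_of_diamondTree [OrderBot T] (hht : IsHeightFun ht) (hΩ : HeightOmega1 ht)
    (hlev : CountableLevels ht) (hd : DiamondTree T) :
    DiamondOn (Iio (omega1 : Ordinal.{u})) := by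
  obtain ⟨D, -, hD⟩ := hd
  obtain ⟨e, he⟩ := hlev.exists_enum
  by_contra hnot
  have hfail : ∀ n : ℕ, ∃ X C, IsClubIn C ∧
      ∀ α ∈ C, α < omega1 → X ∩ Iio α ≠ heightDecode ht (D (e α n)) n α := by
    intro n
    by_contra! h
    exact hnot ⟨fun α => heightDecode ht (D (e α n)) n α, fun _ _ _ hβ => hβ.1,
      fun X _ C hC => let ⟨α, hαC, hα, hX⟩ := h X C hC; ⟨α, ⟨hα, hX⟩, hαC⟩⟩
  choose X C hC hXC using hfail
  have hfix : IsClubIn {α | α < omega1 ∧ ω * α = α} :=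
    isClubIn_fixedPoints (isNormal_mul_right omega0_pos)
      fun o ho => isPrincipal_mul_omega 1 omega0_lt_omega_one ho
  obtain ⟨t, htD, htC⟩ :=
    exists_mem_of_not_inNS hht hΩ (hD (heightCode ht X)) (hfix.inter (.iInter hC))
  obtain ⟨n, hn⟩ := he t
  refine hXC n (ht t) (mem_iInter.1 htC.2 n) (hΩ.1 t) ?_
  rw [hn, ← htD, heightDecode_heightCode_inter_Iio hht X htC.1.2]

end Tree

lemma exists_heightFun_in_universe {T : Type*} [PartialOrder T] {ht : T → Ordinal.{u}}
    (hht : IsHeightFun ht) (hΩ : HeightOmega1 ht) (hlev : CountableLevels ht) :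
    ∃ ht' : T → Ordinal.{v}, IsHeightFun ht' ∧ HeightOmega1 ht' ∧ CountableLevels ht' := by
  obtain ⟨e⟩ := nonempty_orderIso_Iio_omega1.{u, v}
  let toIio : T → Iio (omega1 : Ordinal.{u}) := fun t => ⟨ht t, hΩ.1 t⟩
  refine ⟨fun t => e (toIio t), ⟨fun s t hst => e.strictMono (hht.1 s t hst), fun t o ho => ?_⟩,
    ⟨fun t => (e (toIio t)).2, fun o ho => ?_⟩, fun o => ?_⟩
  · have ho' : o < omega1 := ho.trans (e (toIio t)).2
    have : e.symm ⟨o, ho'⟩ < toIio t := by rw [e.symm_apply_lt]; exact ho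
    obtain ⟨s, hst, hs⟩ := hht.2 t _ this
    refine ⟨s, hst, ?_⟩
    have : toIio s = e.symm ⟨o, ho'⟩ := Subtype.ext hs
    simp [this]
  · obtain ⟨t, htt⟩ := hΩ.2 _ (e.symm ⟨o, ho⟩).2
    have : toIio t = e.symm ⟨o, ho⟩ := Subtype.ext htt
    exact ⟨t, by simp [this]⟩
  · by_cases ho : o < omega1
    · refine (hlev (e.symm ⟨o, ho⟩)).mono fun t htt => ?_
      have : e (toIio t) = ⟨o, ho⟩ := Subtype.ext htt
      simp [← this, toIio]
    · convert countable_empty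
      exact eq_empty_of_forall_notMem fun t htt => ho (htt ▸ (e (toIio t)).2)

theorem stmt3_general {T : Type*} [PartialOrder T] [OrderBot T]
    (ht : T → Ordinal)
    (hht : IsHeightFun ht) (hΩ : HeightOmega1 ht) (hlev : CountableLevels ht)
    (hd : DiamondTree T) :
    DiamondOn (Set.Iio omega1) :=
  (exists_heightFun_in_universe hht hΩ hlev).elim fun _ h =>
    diamondOn_of_diamondTree h.1 h.2.1 h.2.2 hd

/-- If `T` is a nonspecial `ω₁`-tree, then `◊_T` implies `◊`. -/
theorem stmt3 {T : Type*} [PartialOrder T] [OrderBot T]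
    (hchain : PredsChain T) (ht : T → Ordinal)
    (hht : IsHeightFun ht) (hΩ : HeightOmega1 ht) (hlev : CountableLevels ht)
    (hns : ¬ IsSpecialSet (Set.univ : Set T))
    (hd : DiamondTree T) :
    DiamondOn (Set.Iio omega1) :=
  stmt3_general ht hht hΩ hlev hd
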